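/- Let Ω ⊂ [0,∞)^I be compact with min Ω > 0_I. Suppose every firm in a J-firm market uses the same stationary strategy given by a permutation invariant continuous value function V(x_j, {x_{j'}}_{j'∈𝒥∖{j}}) on Ω × Ω^{J−1}. Then the map ({x_{j'}}_{j'∈𝒥∖{j}}) ↦ ∑_{j'∈𝒥∖{j}} η_{I,J−1}(x_{j'}) is injective on multisets of J−1 competitor states, and V factors as V(x_j, {x_{j'}}) = V̄(x_j, ∑_{j'≠j} η_{I,J−1}(x_{j'})) for a continuous V̄; hence tracking the κ(I,J−1) moments ∑_{j'≠j} η_{I,J−1}(x_{j'}) in place of the full competitor state profile loses no information, i.e., moment-based state aggregation with degree-(J−1) multisymmetric power sums is exact. -/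

import Mathlib

/-- Index set of monomials of total degree 1..(J-1) in I variables;
cardinality κ(I,J−1) = binom(J−1+I,I) − 1. -/
def MIdx (I J : ℕ) := {s : Fin I → ℕ // 1 ≤ ∑ i, s i ∧ ∑ i, s i ≤ J}

/-- The multisymmetric power sum map η_{I,J}. -/
noncomputable def eta (I J : ℕ) (x : Fin I → ℝ) : MIdx I J → ℝ :=
  fun s => ∏ i, x i ^ s.val i

/-!
Moments of degree `k` of `N` points `x_j ∈ ℝ^I` determine the `k`-th power sums of the reals
`φ (x_j)` for every linear functional `φ` (multinomial expansion), and by Newton's identities the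
first `N` power sums of `N` reals determine them as a multiset. Choosing `φ` injective on the
finitely many points involved (a vector space over an infinite field is not a finite union of
proper subspaces) lifts this to the points themselves. So the symmetric function `V` is constant on
the fibres of `(x_j, x_{-j}) ↦ (x_j, ∑ η(x_{-j}))`; on the compact domain this map is a quotient
map onto its closed image, so `V` descends to a continuous function there, and Tietze extends it.
-/

open Finset

theorem Equiv.Perm.exists_eq_comp_of_map_univ_eq {ι α : Type*} [Fintype ι] [DecidableEq α]
    {a b : ι → α} (h : univ.val.map a = univ.val.map b) :
    ∃ σ : Equiv.Perm ι, b = a ∘ σ := by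
  have hcard (v : α) : Fintype.card {j // b j = v} = Fintype.card {j // a j = v} := by
    have := congrArg (Multiset.count v) h
    simp only [Multiset.count_map, eq_comm (a := v)] at this
    rw [Fintype.card_subtype, Fintype.card_subtype]
    exact this.symm
  let e (v : α) : {j // b j = v} ≃ {j // a j = v} := Fintype.equivOfCardEq (hcard v)
  refine ⟨(Equiv.sigmaFiberEquiv b).symm.trans
    ((Equiv.sigmaCongrRight e).trans (Equiv.sigmaFiberEquiv a)), funext fun j => ?_⟩
  exact ((e (b j)) ⟨j, rfl⟩).2.symm

open Polynomial in
theorem Multiset.eq_of_esymm_eq {R : Type*} [CommRing R] [IsDomain R] {s t : Multiset R}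
    (hcard : s.card = t.card) (h : ∀ k ≤ s.card, s.esymm k = t.esymm k) : s = t := by
  have hpoly : (s.map fun r => X - C r).prod = (t.map fun r => X - C r).prod := by
    ext n
    by_cases hn : n ≤ s.card
    · rw [Multiset.prod_X_sub_C_coeff s hn, Multiset.prod_X_sub_C_coeff t (hcard ▸ hn), ← hcard,
        h _ (Nat.sub_le _ _)]
    · rw [coeff_eq_zero_of_natDegree_lt, coeff_eq_zero_of_natDegree_lt] <;>
        simp only [natDegree_multiset_prod_X_sub_C_eq_card] <;> omega
  simpa using congrArg Polynomial.roots hpoly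

section PowerSums

open MvPolynomial

variable {R ι : Type*} [CommRing R] [IsDomain R] [CharZero R] [Fintype ι]

theorem MvPolynomial.aeval_esymm_eq_of_aeval_psum_eq {a b : ι → R} {N : ℕ}
    (h : ∀ k, 1 ≤ k → k ≤ N → aeval a (psum ι R k) = aeval b (psum ι R k)) :
    ∀ k ≤ N, aeval a (esymm ι R k) = aeval b (esymm ι R k) := by
  intro k
  induction k using Nat.strong_induction_on with
  | _ k ih =>
  intro hk
  rcases Nat.eq_zero_or_pos k with rfl | hk0
  · simp
  have newton (f : ι → R) := congrArg (aeval f) (mul_esymm_eq_sum ι R k)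
  simp only [map_mul, map_sum, map_pow, map_natCast, map_neg, map_one] at newton
  refine mul_left_cancel₀ (Nat.cast_ne_zero.mpr hk0.ne' : (k : R) ≠ 0) ?_
  rw [newton a, newton b]
  congr 1
  refine sum_congr rfl fun p hp => ?_
  rw [mem_filter, HasAntidiagonal.mem_antidiagonal] at hp
  rw [ih p.1 hp.2 (by omega), h p.2 (by omega) (by omega)]

theorem map_univ_eq_of_sum_pow_eq {a b : ι → R}
    (h : ∀ k, 1 ≤ k → k ≤ Fintype.card ι → ∑ j, a j ^ k = ∑ j, b j ^ k) :
    univ.val.map a = univ.val.map b := by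
  refine Multiset.eq_of_esymm_eq (by simp) fun k hk => ?_
  rw [← aeval_esymm_eq_multiset_esymm ι R, ← aeval_esymm_eq_multiset_esymm ι R]
  refine aeval_esymm_eq_of_aeval_psum_eq (fun k h1 h2 => ?_) k (by simpa using hk)
  simpa [psum] using h k h1 h2

end PowerSums

theorem Module.Dual.exists_injOn {K V : Type*} [Field K] [Infinite K] [AddCommGroup V]
    [Module K V] {s : Set V} (hs : s.Finite) : ∃ φ : Module.Dual K V, Set.InjOn φ s := by
  by_contra! hcover
  simp only [Set.InjOn, not_forall] at hcover
  let P : Set (V × V) := {p | p.1 ∈ s ∧ p.2 ∈ s ∧ p.1 ≠ p.2}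
  have : Finite P := ((hs.prod hs).subset fun _ hp => ⟨hp.1, hp.2.1⟩).to_subtype
  have hP : ⋃ p : P, ((Module.Dual.eval K V (p.1.1 - p.1.2)).ker : Set (Module.Dual K V)) =
      Set.univ := by
    refine Set.eq_univ_of_forall fun φ => ?_
    obtain ⟨u, hu, v, hv, huv, hne⟩ := hcover φ
    exact Set.mem_iUnion.mpr ⟨⟨(u, v), hu, hv, hne⟩, by simp [huv]⟩
  obtain ⟨⟨⟨u, v⟩, _, _, hne⟩, htop⟩ := Subspace.exists_eq_top_of_iUnion_eq_univ hP
  refine hne (sub_eq_zero.mp ((forall_dual_apply_eq_zero_iff K _).mp fun φ => ?_))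
  simpa using LinearMap.congr_fun (LinearMap.ker_eq_top.mp htop) φ

universe u v in
theorem exists_continuousMap_comp_eq_of_isCompact {X : Type*} {Y : Type u} {Z : Type v}
    [TopologicalSpace X] [TopologicalSpace Y] [T2Space Y] [NormalSpace Y] [TopologicalSpace Z]
    [TietzeExtension.{u, v} Z]
    {s : Set X} (hs : IsCompact s) {q : X → Y} (hq : Continuous q) {f : X → Z}
    (hf : ContinuousOn f s) (hfib : ∀ x ∈ s, ∀ x' ∈ s, q x = q x' → f x = f x') :
    ∃ g : C(Y, Z), ∀ x ∈ s, f x = g (q x) := by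
  have : CompactSpace s := isCompact_iff_compactSpace.mp hs
  let q' : C(s, q '' s) := ⟨fun x => ⟨q x, Set.mem_image_of_mem q x.2⟩, by fun_prop⟩
  have hq' : Topology.IsQuotientMap q' :=
    q'.continuous.isClosedMap.isQuotientMap q'.continuous
      fun ⟨_, x, hx, hxy⟩ => ⟨⟨x, hx⟩, Subtype.ext hxy⟩
  let f' : C(s, Z) := ⟨s.domRestrict f, hf.domRestrict⟩
  have hf' : Function.FactorsThrough f' q' := fun x x' hxx' =>
    hfib x x.2 x' x'.2 (congrArg Subtype.val hxx')
  obtain ⟨g, hg⟩ := (hq'.lift f' hf').exists_restrict_eq (hs.image hq).isClosed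
  refine ⟨g, fun x hx => ?_⟩
  have := DFunLike.congr_fun (hq'.lift_comp f' hf') ⟨x, hx⟩
  rw [← hg] at this
  exact this.symm

-- Makes `MIdx I N → ℝ` metrizable, hence normal, as the Tietze extension requires.
instance (I N : ℕ) : Countable (MIdx I N) := Subtype.countable

theorem continuous_eta (I N : ℕ) : Continuous (eta I N) :=
  continuous_pi fun _ => continuous_finsetProd _ fun i _ => (continuous_apply i).pow _

theorem sum_eta_apply {I N : ℕ} {ι : Type*} [Fintype ι] (x : ι → Fin I → ℝ) (s : MIdx I N) :
    (∑ j, eta I N (x j)) s = ∑ j, ∏ i, x j i ^ s.val i :=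
  Finset.sum_apply _ _ _

theorem sum_apply_pow_eq_of_sum_eta_eq {I N : ℕ} {ι : Type*} [Fintype ι]
    (φ : Module.Dual ℝ (Fin I → ℝ)) {x y : ι → Fin I → ℝ}
    (heq : ∑ j, eta I N (x j) = ∑ j, eta I N (y j)) {k : ℕ} (hk1 : 1 ≤ k) (hkN : k ≤ N) :
    ∑ j, φ (x j) ^ k = ∑ j, φ (y j) ^ k := by
  set c : Fin I → ℝ := fun i => φ fun j => if i = j then 1 else 0
  have expand (z : Fin I → ℝ) : φ z ^ k = ∑ s ∈ univ.piAntidiag k,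
      (Nat.multinomial univ s * ∏ i, c i ^ s i) * ∏ i, z i ^ s i := by
    rw [LinearMap.pi_apply_eq_sum_univ, sum_pow_eq_sum_piAntidiag]
    refine sum_congr rfl fun s _ => ?_
    simp only [smul_eq_mul, mul_pow, prod_mul_distrib, c]
    ring
  have hmoment : ∀ s ∈ univ.piAntidiag k, ∑ j, ∏ i, x j i ^ s i = ∑ j, ∏ i, y j i ^ s i := by
    intro s hs
    have hs' : ∑ i, s i = k := (mem_piAntidiag.mp hs).1
    let t : MIdx I N := ⟨s, by omega, by omega⟩
    exact (sum_eta_apply x t).symm.trans ((congrFun heq t).trans (sum_eta_apply y t))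
  simp_rw [expand]
  rw [sum_comm, sum_comm (s := univ)]
  simp_rw [← mul_sum]
  exact sum_congr rfl fun s hs => by rw [hmoment s hs]

theorem exists_perm_of_sum_eta_eq {I N : ℕ} {x y : Fin N → Fin I → ℝ}
    (heq : ∑ j, eta I N (x j) = ∑ j, eta I N (y j)) : ∃ σ : Equiv.Perm (Fin N), y = x ∘ σ := by
  obtain ⟨φ, hφ⟩ :=
    Module.Dual.exists_injOn (K := ℝ) ((Set.finite_range x).union (Set.finite_range y))
  obtain ⟨σ, hσ⟩ := Equiv.Perm.exists_eq_comp_of_map_univ_eq (map_univ_eq_of_sum_pow_eq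
    (a := fun j => φ (x j)) (b := fun j => φ (y j)) fun k hk1 hkN =>
      sum_apply_pow_eq_of_sum_eta_eq φ heq hk1 (by simpa using hkN))
  exact ⟨σ, funext fun j => hφ (Or.inr ⟨j, rfl⟩) (Or.inl ⟨σ j, rfl⟩) (congrFun hσ j)⟩

theorem stmt_15_general (I J : ℕ)
    (Ω : Set (Fin I → ℝ)) (hΩc : IsCompact Ω)
    (V : (Fin I → ℝ) → (Fin (J - 1) → (Fin I → ℝ)) → ℝ)
    (hVperm : ∀ xj ∈ Ω, ∀ x : Fin (J - 1) → (Fin I → ℝ), (∀ j, x j ∈ Ω) →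
      ∀ σ : Equiv.Perm (Fin (J - 1)), V xj (x ∘ σ) = V xj x)
    (hVcont : ContinuousOn
      (fun p : (Fin I → ℝ) × (Fin (J - 1) → (Fin I → ℝ)) => V p.1 p.2)
      (Ω ×ˢ {x | ∀ j, x j ∈ Ω})) :
    -- injectivity of the moment map on multisets of competitor states
    (∀ x y : Fin (J - 1) → (Fin I → ℝ), (∀ j, x j ∈ Ω) → (∀ j, y j ∈ Ω) →
      ∑ j, eta I (J - 1) (x j) = ∑ j, eta I (J - 1) (y j) →
      ∃ σ : Equiv.Perm (Fin (J - 1)), y = x ∘ σ) ∧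
    -- factorization of the value function through the moments
    (∃ Vb : (Fin I → ℝ) → (MIdx I (J - 1) → ℝ) → ℝ,
      ContinuousOn
        (fun p : (Fin I → ℝ) × (MIdx I (J - 1) → ℝ) => Vb p.1 p.2)
        (Ω ×ˢ (Set.univ : Set (MIdx I (J - 1) → ℝ))) ∧
      ∀ xj ∈ Ω, ∀ x : Fin (J - 1) → (Fin I → ℝ), (∀ j, x j ∈ Ω) →
        V xj x = Vb xj (∑ j, eta I (J - 1) (x j))) := by
  have hK : IsCompact (Ω ×ˢ {x : Fin (J - 1) → Fin I → ℝ | ∀ j, x j ∈ Ω}) :=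
    hΩc.prod (by simpa [Set.pi] using isCompact_univ_pi fun _ : Fin (J - 1) => hΩc)
  have hq : Continuous fun p : (Fin I → ℝ) × (Fin (J - 1) → Fin I → ℝ) =>
      (p.1, ∑ j, eta I (J - 1) (p.2 j)) :=
    continuous_fst.prodMk <| continuous_finsetSum _ fun j _ =>
      (continuous_eta I (J - 1)).comp ((continuous_apply j).comp continuous_snd)
  obtain ⟨G, hG⟩ := exists_continuousMap_comp_eq_of_isCompact hK hq hVcont <| by
    rintro ⟨a, x⟩ ⟨ha, hx⟩ ⟨b, y⟩ - hxy
    obtain ⟨rfl, hm⟩ := Prod.ext_iff.mp hxy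
    obtain ⟨σ, rfl⟩ := exists_perm_of_sum_eta_eq hm
    exact (hVperm a ha x hx σ).symm
  exact ⟨fun _ _ _ _ => exists_perm_of_sum_eta_eq, fun a m => G (a, m),
    G.continuous.continuousOn,
    fun xj hxj x hx => hG (xj, x) ⟨hxj, hx⟩⟩

/-- exactness of moment-based state aggregation with
degree-(J−1) multisymmetric power sums: the moment map is injective on
multisets of J−1 competitor states, and the value function factors through
the moments via a continuous function. -/
theorem stmt_15 (I J : ℕ) (hJ : 0 < J)
    (Ω : Set (Fin I → ℝ)) (hΩc : IsCompact Ω)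
    (hΩnn : ∀ x ∈ Ω, ∀ i, 0 ≤ x i)
    (m : Fin I → ℝ) (hmΩ : m ∈ Ω) (hmin : ∀ x ∈ Ω, ∀ i, m i ≤ x i)
    (hmpos : ∀ i, 0 < m i)
    (V : (Fin I → ℝ) → (Fin (J - 1) → (Fin I → ℝ)) → ℝ)
    (hVperm : ∀ xj ∈ Ω, ∀ x : Fin (J - 1) → (Fin I → ℝ), (∀ j, x j ∈ Ω) →
      ∀ σ : Equiv.Perm (Fin (J - 1)), V xj (x ∘ σ) = V xj x)
    (hVcont : ContinuousOn
      (fun p : (Fin I → ℝ) × (Fin (J - 1) → (Fin I → ℝ)) => V p.1 p.2)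
      (Ω ×ˢ {x | ∀ j, x j ∈ Ω})) :
    -- injectivity of the moment map on multisets of competitor states
    (∀ x y : Fin (J - 1) → (Fin I → ℝ), (∀ j, x j ∈ Ω) → (∀ j, y j ∈ Ω) →
      ∑ j, eta I (J - 1) (x j) = ∑ j, eta I (J - 1) (y j) →
      ∃ σ : Equiv.Perm (Fin (J - 1)), y = x ∘ σ) ∧
    -- factorization of the value function through the moments
    (∃ Vb : (Fin I → ℝ) → (MIdx I (J - 1) → ℝ) → ℝ,
      ContinuousOn
        (fun p : (Fin I → ℝ) × (MIdx I (J - 1) → ℝ) => Vb p.1 p.2)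
        (Ω ×ˢ (Set.univ : Set (MIdx I (J - 1) → ℝ))) ∧
      ∀ xj ∈ Ω, ∀ x : Fin (J - 1) → (Fin I → ℝ), (∀ j, x j ∈ Ω) →
        V xj x = Vb xj (∑ j, eta I (J - 1) (x j))) :=
  stmt_15_general I J Ω hΩc V hVperm hVcont
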